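/- Under assumption (LD), if e is differentiable on (a,b), then for every θ ∈ (D⁺e(a), D⁻e(b)), liminf_t (1/w_t) log P_t({x : X_t(x) > θ w_t}) ≥ −φ(θ), where φ(θ) = sup_{s∈[a,b]}(θs − e(s)). -/

import Mathlib

/-!
Choose `θ < θ' < γ` close to `θ` with `θ' ≠ 0`; by Darboux's theorem `e' s = θ'` for some
`s ∈ (a, b)`. Split `∫ exp (s X_t) dP_t` according to `X_t ≤ θ w_t`, `X_t ≥ γ w_t` or neither.
The first two parts are at most `exp ((s - u) θ w_t) ∫ exp (u X_t) dP_t` and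
`exp ((s - v) γ w_t) ∫ exp (v X_t) dP_t` for any `u ≤ s ≤ v`, so their growth rates are
`e u + (s - u) θ` and `e v + (s - v) γ`; since `θ < e' s < γ`, these are strictly below `e s` for
`u < s < v` close to `s`. The remaining part, at most `exp (max (s θ) (s γ) w_t) P_t(X_t > θ w_t)`,
therefore carries the rate `e s`, and `e s - max (s θ) (s γ) ≥ -φ(θ) - |s| (γ - θ)` with
`γ - θ` arbitrarily small.
-/

open Filter MeasureTheory

/-- Fenchel–Legendre transform of a function `e` on `[a,b]`. -/
noncomputable def flt (a b : ℝ) (e : ℝ → ℝ) (θ : ℝ) : ℝ :=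
  sSup ((fun s => θ * s - e s) '' Set.Icc a b)

open Set Topology Real
open scoped ENNReal

lemma ofReal_exp_mul_le {s u v : ℝ} (hus : u ≤ s) (hsv : s ≤ v) (A B x : ℝ) :
    ENNReal.ofReal (exp (s * x)) ≤
      ENNReal.ofReal (exp ((s - u) * A)) * ENNReal.ofReal (exp (u * x)) +
      ENNReal.ofReal (exp ((s - v) * B)) * ENNReal.ofReal (exp (v * x)) +
      {y | A < y}.indicator (fun _ => ENNReal.ofReal (exp (max (s * A) (s * B)))) x := by
  simp only [← ENNReal.ofReal_mul (exp_nonneg _), ← exp_add]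
  rcases le_or_gt x A with hxA | hAx
  · refine le_add_right (le_add_right (ENNReal.ofReal_le_ofReal (exp_le_exp.mpr ?_)))
    nlinarith
  rcases le_or_gt B x with hBx | hxB
  · refine le_add_right (le_add_left (ENNReal.ofReal_le_ofReal (exp_le_exp.mpr ?_)))
    nlinarith
  · rw [indicator_of_mem (show x ∈ {y | A < y} from hAx)]
    refine le_add_left (ENNReal.ofReal_le_ofReal (exp_le_exp.mpr ?_))
    rcases le_total 0 s with hs | hs
    · exact (mul_le_mul_of_nonneg_left hxB.le hs).trans (le_max_right _ _)
    · exact (mul_le_mul_of_nonpos_left hAx.le hs).trans (le_max_left _ _)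

lemma lintegral_ofReal_exp_mul_le {Ω : Type*} [MeasurableSpace Ω] (μ : Measure Ω) {X : Ω → ℝ}
    (hX : Measurable X) {s u v : ℝ} (hus : u ≤ s) (hsv : s ≤ v) (A B : ℝ) :
    ∫⁻ ω, ENNReal.ofReal (exp (s * X ω)) ∂μ ≤
      ENNReal.ofReal (exp ((s - u) * A)) * ∫⁻ ω, ENNReal.ofReal (exp (u * X ω)) ∂μ +
      ENNReal.ofReal (exp ((s - v) * B)) * ∫⁻ ω, ENNReal.ofReal (exp (v * X ω)) ∂μ +
      ENNReal.ofReal (exp (max (s * A) (s * B))) * μ {ω | A < X ω} := by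
  have hmeas (r : ℝ) : Measurable fun ω => ENNReal.ofReal (exp (r * X ω)) := by fun_prop
  calc ∫⁻ ω, ENNReal.ofReal (exp (s * X ω)) ∂μ
      ≤ ∫⁻ ω, (ENNReal.ofReal (exp ((s - u) * A)) * ENNReal.ofReal (exp (u * X ω)) +
          ENNReal.ofReal (exp ((s - v) * B)) * ENNReal.ofReal (exp (v * X ω)) +
          {ω | A < X ω}.indicator (fun _ => ENNReal.ofReal (exp (max (s * A) (s * B)))) ω) ∂μ :=
        lintegral_mono fun ω => ofReal_exp_mul_le hus hsv A B (X ω)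
    _ ≤ _ := by
      rw [lintegral_add_left (by fun_prop), lintegral_add_left (by fun_prop),
        lintegral_const_mul _ (hmeas u), lintegral_const_mul _ (hmeas v)]
      gcongr
      exact lintegral_indicator_const_le _ _

lemma lintegral_ofReal_exp_mul_eq_zero_iff {Ω : Type*} [MeasurableSpace Ω] {μ : Measure Ω}
    {X : Ω → ℝ} (hX : Measurable X) (s : ℝ) :
    ∫⁻ ω, ENNReal.ofReal (exp (s * X ω)) ∂μ = 0 ↔ μ = 0 := by
  rw [lintegral_eq_zero_iff (by fun_prop)]
  simp only [EventuallyEq, Pi.zero_apply, ENNReal.ofReal_eq_zero, ← not_lt, exp_pos,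
    not_true_eq_false, eventually_false_iff_eq_bot, ae_eq_bot]

lemma HasDerivAt.frequently_ne_zero {f : ℝ → ℝ} {f' x : ℝ} {l : Filter ℝ} [l.NeBot]
    (hl : l ≤ 𝓝[≠] x) (hf : HasDerivAt f f' x) (hf' : f' ≠ 0) : ∃ᶠ y in l, f y ≠ 0 := by
  refine fun hzero => hf' ?_
  simp only [not_not] at hzero
  have hfx : f x = 0 := tendsto_nhds_unique
    (hf.continuousAt.tendsto.mono_left (hl.trans nhdsWithin_le_nhds))
    (tendsto_const_nhds.congr' (hzero.mono fun _ hy => hy.symm))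
  refine tendsto_nhds_unique ((hf.tendsto_slope).mono_left hl)
    (tendsto_const_nhds.congr' (hzero.mono fun y hy => ?_))
  simp [slope_def_field, hy, hfx]

lemma exists_mem_Ioo_hasDerivAt_eq {e : ℝ → ℝ} {a b da db m : ℝ} (hab : a < b)
    (hdiff : ∀ s ∈ Ioo a b, DifferentiableAt ℝ e s)
    (hda : HasDerivWithinAt e da (Ici a) a) (hdb : HasDerivWithinAt e db (Iic b) b)
    (hma : da < m) (hmb : m < db) : ∃ c ∈ Ioo a b, HasDerivAt e m c := by
  classical
  set e' : ℝ → ℝ := fun s => if s = a then da else if s = b then db else deriv e s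
  have he' : ∀ s ∈ Icc a b, HasDerivWithinAt e (e' s) (Icc a b) s := by
    intro s hs
    rcases eq_or_ne s a with rfl | hsa
    · simpa [e'] using hda.mono Icc_subset_Ici_self
    rcases eq_or_ne s b with rfl | hsb
    · simpa [e', hsa] using hdb.mono Icc_subset_Iic_self
    have hs' : s ∈ Ioo a b := ⟨lt_of_le_of_ne hs.1 (Ne.symm hsa), lt_of_le_of_ne hs.2 hsb⟩
    simpa [e', hsa, hsb] using (hdiff s hs').hasDerivAt.hasDerivWithinAt
  obtain ⟨c, hc, hcm⟩ := exists_hasDerivWithinAt_eq_of_gt_of_lt hab.le he'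
    (by simpa [e'] using hma) (by simpa [e', hab.ne'] using hmb)
  have hderiv : deriv e c = m := by simpa [e', hc.1.ne', hc.2.ne] using hcm
  exact ⟨c, hc, hderiv ▸ (hdiff c hc).hasDerivAt⟩

lemma HasDerivAt.exists_mem_Ioo_left_ne_zero {e : ℝ → ℝ} {m s a β : ℝ} (hd : HasDerivAt e m s)
    (hm : m ≠ 0) (has : a < s) (hβ : β < m) :
    ∃ u ∈ Ioo a s, e u ≠ 0 ∧ e u + (s - u) * β < e s := by
  have hslope := hd.tendsto_slope.mono_left (nhdsLT_le_nhdsNE s)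
  obtain ⟨u, ⟨hβu, hu⟩, hne⟩ :=
    (((hslope.eventually_const_lt hβ).and (Ioo_mem_nhdsLT has)).and_frequently
      (hd.frequently_ne_zero (nhdsLT_le_nhdsNE s) hm)).exists
  rw [slope_def_field, lt_div_iff_of_neg (sub_neg.mpr hu.2)] at hβu
  exact ⟨u, hu, hne, by linarith⟩

lemma HasDerivAt.exists_mem_Ioo_right_ne_zero {e : ℝ → ℝ} {m s b γ : ℝ} (hd : HasDerivAt e m s)
    (hm : m ≠ 0) (hsb : s < b) (hγ : m < γ) :
    ∃ v ∈ Ioo s b, e v ≠ 0 ∧ e v + (s - v) * γ < e s := by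
  have hslope := hd.tendsto_slope.mono_left (nhdsGT_le_nhdsNE s)
  obtain ⟨v, ⟨hvγ, hv⟩, hne⟩ :=
    (((hslope.eventually_lt_const hγ).and (Ioo_mem_nhdsGT hsb)).and_frequently
      (hd.frequently_ne_zero (nhdsGT_le_nhdsNE s) hm)).exists
  rw [slope_def_field, div_lt_iff₀ (sub_pos.mpr hv.1)] at hvγ
  exact ⟨v, hv, hne, by linarith⟩

section Rates

variable {ι : Type*} {l : Filter ι} {W : ι → ℝ}

/-- Since `log 0 = 0` and `(⊤ : ℝ≥0∞).toReal = 0`, a limit `0` would allow `Z i ∈ {0, ⊤}`;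
a nonzero limit rules both out. -/
lemma eventually_ne_zero_and_le_ofReal_exp {Z : ι → ℝ≥0∞} (hW : ∀ i, 0 < W i) {L ε : ℝ}
    (hL : L ≠ 0) (hε : 0 < ε) (hZ : Tendsto (fun i => log (Z i).toReal / W i) l (𝓝 L)) :
    ∀ᶠ i in l, Z i ≠ 0 ∧ Z i ≤ ENNReal.ofReal (exp ((L + ε) * W i)) := by
  filter_upwards [hZ.eventually_ne hL, hZ.eventually_lt_const (lt_add_of_pos_right L hε)]
    with i hne hlt
  have hpos : 0 < (Z i).toReal := by
    refine lt_of_le_of_ne ENNReal.toReal_nonneg fun h => hne ?_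
    simp [← h]
  refine ⟨(ENNReal.toReal_pos_iff.mp hpos).1.ne', ?_⟩
  rw [← ENNReal.ofReal_toReal (ENNReal.toReal_pos_iff.mp hpos).2.ne]
  exact ENNReal.ofReal_le_ofReal ((log_lt_iff_lt_exp hpos).mp ((div_lt_iff₀ (hW i)).mp hlt)).le

lemma eventually_ofReal_exp_le {Z : ι → ℝ≥0∞} (hW : ∀ i, 0 < W i) {L ε : ℝ} (hε : 0 < ε)
    (hZ0 : ∀ᶠ i in l, Z i ≠ 0) (hZ : Tendsto (fun i => log (Z i).toReal / W i) l (𝓝 L)) :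
    ∀ᶠ i in l, ENNReal.ofReal (exp ((L - ε) * W i)) ≤ Z i := by
  filter_upwards [hZ0, hZ.eventually_const_lt (sub_lt_self L hε)] with i hne hlt
  rcases eq_or_ne (Z i) ⊤ with htop | htop
  · simp [htop]
  have hpos : 0 < (Z i).toReal := ENNReal.toReal_pos hne htop
  rw [← ENNReal.ofReal_toReal htop]
  exact ENNReal.ofReal_le_ofReal ((lt_log_iff_exp_lt hpos).mp ((lt_div_iff₀ (hW i)).mp hlt)).le

lemma eventually_sub_le_log_div_of_exp_le (hW : Tendsto W l atTop) {S : ι → ℝ}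
    {r ρ₁ ρ₂ C η : ℝ} (h₁ : ρ₁ < r) (h₂ : ρ₂ < r) (hη : 0 < η)
    (h : ∀ᶠ i in l, exp (r * W i) ≤ exp (ρ₁ * W i) + exp (ρ₂ * W i) + exp (C * W i) * S i) :
    ∀ᶠ i in l, r - C - η ≤ log (S i) / W i := by
  have hlarge {κ : ℝ} (hκ : 0 < κ) (c : ℝ) : ∀ᶠ i in l, c ≤ κ * W i :=
    (hW.const_mul_atTop hκ).eventually_ge_atTop c
  filter_upwards [h, hlarge (sub_pos.mpr h₁) (log 4), hlarge (sub_pos.mpr h₂) (log 4),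
    hlarge hη (log 2)] with i hi hi₁ hi₂ hiη
  have hWpos : 0 < W i := pos_of_mul_pos_right ((log_pos one_lt_two).trans_le hiη) hη.le
  have hsmall {ρ : ℝ} (hρ : log 4 ≤ (r - ρ) * W i) : 4 * exp (ρ * W i) ≤ exp (r * W i) := by
    rw [← exp_log (by norm_num : (0 : ℝ) < 4), ← exp_add]
    exact exp_le_exp.mpr (by linarith)
  have hhalf : exp ((r - C) * W i - log 2) ≤ S i := by
    rw [exp_sub, exp_log two_pos, div_le_iff₀ two_pos, sub_mul, exp_sub,
      div_le_iff₀ (exp_pos _)]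
    nlinarith [hsmall hi₁, hsmall hi₂, exp_pos (C * W i)]
  rw [le_div_iff₀ hWpos]
  calc (r - C - η) * W i ≤ (r - C) * W i - log 2 := by linarith
    _ ≤ log (S i) := by simpa using log_le_log (exp_pos _) hhalf

end Rates

lemma le_flt {a b : ℝ} {e : ℝ → ℝ} (he : ContinuousOn e (Icc a b)) (θ : ℝ) {s : ℝ}
    (hs : s ∈ Icc a b) : θ * s - e s ≤ flt a b e θ :=
  le_csSup ((isCompact_Icc.image_of_continuousOn
    ((continuousOn_const.mul continuousOn_id).sub he)).bddAbove) ⟨s, hs, rfl⟩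

lemma EReal.coe_le_liminf_of_forall_eventually {ι : Type*} {l : Filter ι} {f : ι → ℝ} {c : ℝ}
    (h : ∀ ε > 0, ∀ᶠ i in l, c - ε ≤ f i) : (c : EReal) ≤ liminf (fun i => (f i : EReal)) l := by
  refine EReal.ge_of_forall_gt_iff_ge.mp fun z hz => le_liminf_of_le (by isBoundedDefault) ?_
  have hz' : z < c := by exact_mod_cast hz
  filter_upwards [h (c - z) (by linarith)] with i hi
  exact_mod_cast (by linarith : z ≤ f i)

noncomputable def scaledLogMGF {ι : Type*} {Ω : ι → Type*} [∀ i, MeasurableSpace (Ω i)]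
    (P : ∀ i, Measure (Ω i)) (X : ∀ i, Ω i → ℝ) (W : ι → ℝ) (i : ι) (s : ℝ) : ℝ :=
  log (∫⁻ ω, ENNReal.ofReal (exp (s * X i ω)) ∂P i).toReal / W i

lemma eventually_sub_le_log_measure_gt_div {ι : Type*} {l : Filter ι} {Ω : ι → Type*}
    [∀ i, MeasurableSpace (Ω i)] {P : ∀ i, Measure (Ω i)} [∀ i, IsFiniteMeasure (P i)]
    {X : ∀ i, Ω i → ℝ} (hX : ∀ i, Measurable (X i)) {W : ι → ℝ} (hW : ∀ i, 0 < W i)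
    (hWtop : Tendsto W l atTop) {e : ℝ → ℝ} {u s v θ γ η : ℝ}
    (heu : Tendsto (fun i => scaledLogMGF P X W i u) l (𝓝 (e u)))
    (hes : Tendsto (fun i => scaledLogMGF P X W i s) l (𝓝 (e s)))
    (hev : Tendsto (fun i => scaledLogMGF P X W i v) l (𝓝 (e v)))
    (hus : u ≤ s) (hsv : s ≤ v) (hu0 : e u ≠ 0) (hv0 : e v ≠ 0)
    (hgapu : e u + (s - u) * θ < e s) (hgapv : e v + (s - v) * γ < e s) (hη : 0 < η) :
    ∀ᶠ i in l, e s - max (s * θ) (s * γ) - η ≤ log (P i {ω | θ * W i < X i ω}).toReal / W i := by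
  obtain ⟨ε, hε, hεη, hεu, hεv⟩ : ∃ ε > 0, ε < η ∧
      e u + (s - u) * θ + ε < e s - ε ∧ e v + (s - v) * γ + ε < e s - ε := by
    set δ := min η (min (e s - (e u + (s - u) * θ)) (e s - (e v + (s - v) * γ)))
    obtain ⟨hδη, hδuv⟩ := le_min_iff.mp (le_refl δ)
    obtain ⟨hδu, hδv⟩ := le_min_iff.mp hδuv
    have hδ : 0 < δ := lt_min hη (lt_min (by linarith) (by linarith))
    exact ⟨δ / 3, by positivity, by linarith, by linarith, by linarith⟩
  have hbounds := ((eventually_ne_zero_and_le_ofReal_exp hW hu0 hε heu).and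
    (eventually_ne_zero_and_le_ofReal_exp hW hv0 hε hev))
  have hZs := eventually_ofReal_exp_le hW hε (hbounds.mono fun i hi => by
    rw [Ne, lintegral_ofReal_exp_mul_eq_zero_iff (hX i)] at hi ⊢
    exact hi.1.1) hes
  have hsum : ∀ᶠ i in l, exp ((e s - ε) * W i) ≤ exp ((e u + (s - u) * θ + ε) * W i) +
      exp ((e v + (s - v) * γ + ε) * W i) +
      exp (max (s * θ) (s * γ) * W i) * (P i {ω | θ * W i < X i ω}).toReal := by
    filter_upwards [hbounds, hZs] with i hZuv hZs
    obtain ⟨⟨-, hZu⟩, -, hZv⟩ := hZuv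
    have htilt {c g d : ℝ} {Z : ℝ≥0∞} (hZ : Z ≤ ENNReal.ofReal (exp (d * W i))) :
        ENNReal.ofReal (exp (c * (g * W i))) * Z ≤ ENNReal.ofReal (exp ((d + c * g) * W i)) :=
      calc _ ≤ ENNReal.ofReal (exp (c * (g * W i))) * ENNReal.ofReal (exp (d * W i)) := by gcongr
        _ = _ := by rw [← ENNReal.ofReal_mul (exp_nonneg _), ← exp_add]; ring_nf
    rw [← ENNReal.ofReal_le_ofReal_iff (by positivity), ENNReal.ofReal_add (by positivity)
      (by positivity), ENNReal.ofReal_add (by positivity) (by positivity),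
      ENNReal.ofReal_mul (exp_nonneg _), ENNReal.ofReal_toReal (measure_ne_top _ _)]
    calc ENNReal.ofReal (exp ((e s - ε) * W i)) ≤ _ := hZs
      _ ≤ _ := lintegral_ofReal_exp_mul_le (P i) (hX i) hus hsv (θ * W i) (γ * W i)
      _ ≤ _ := by
        gcongr ?_ + ?_ + ?_
        · exact (htilt hZu).trans_eq (by ring_nf)
        · exact (htilt hZv).trans_eq (by ring_nf)
        · rw [max_mul_of_nonneg _ _ (hW i).le, mul_assoc, mul_assoc]
  filter_upwards [eventually_sub_le_log_div_of_exp_le hWtop hεu hεv (sub_pos.mpr hεη) hsum]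
    with i hi
  linarith

/-- Lower large deviation bound: under assumption (LD), if `e` is differentiable on `(a,b)`
then for `θ ∈ (D⁺e(a), D⁻e(b))`:
`liminf (1/w_t) log P_t(X_t > θ w_t) ≥ −φ(θ)`. -/
theorem ld_lower_bound {Ω : ℝ → Type*} [∀ t, MeasurableSpace (Ω t)]
    (P : ∀ t, Measure (Ω t)) (hP : ∀ t, IsFiniteMeasure (P t))
    (X : ∀ t, Ω t → ℝ) (hX : ∀ t, Measurable (X t))
    (w : ℝ → ℝ) (hw : ∀ t, 0 < w t) (hwtop : Tendsto w atTop atTop)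
    (a b : ℝ) (hab : a < b)
    (e : ℝ → ℝ)
    (he : ∀ s ∈ Set.Icc a b, Tendsto
      (fun t => Real.log ((∫⁻ x, ENNReal.ofReal (Real.exp (s * X t x)) ∂ (P t)).toReal) / w t)
      atTop (nhds (e s)))
    (hecont : ContinuousOn e (Set.Icc a b))
    (hediff : ∀ s ∈ Set.Ioo a b, DifferentiableAt ℝ e s)
    (da db : ℝ)
    (hda : HasDerivWithinAt e da (Set.Ici a) a)
    (hdb : HasDerivWithinAt e db (Set.Iic b) b)
    (θ : ℝ) (hθ : θ ∈ Set.Ioo da db) :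
    ((-(flt a b e θ) : ℝ) : EReal) ≤
      Filter.liminf
        (fun t => ((Real.log ((P t {x | θ * w t < X t x}).toReal) / w t : ℝ) : EReal)) atTop := by
  refine EReal.coe_le_liminf_of_forall_eventually fun ε hε => ?_
  set K := max |a| |b|
  have hK : 0 < K + 1 := by positivity
  have hθc : θ < min db (θ + ε / (2 * (K + 1))) :=
    lt_min hθ.2 (lt_add_of_pos_right θ (by positivity))
  -- `θ' ≠ 0` prevents `e` from vanishing on a one-sided neighbourhood of the point `s` below.
  obtain ⟨θ', ⟨hθθ', hθ'c⟩, hθ'0 : θ' ≠ 0⟩ :=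
    ((Ioo_infinite hθc).sdiff (finite_singleton 0)).nonempty
  obtain ⟨γ, hθ'γ, hγc⟩ := exists_between hθ'c
  obtain ⟨s, hs, hd⟩ := exists_mem_Ioo_hasDerivAt_eq hab hediff hda hdb (hθ.1.trans hθθ')
    (hθ'c.trans_le (min_le_left _ _))
  obtain ⟨u, hu, heu, hgapu⟩ := hd.exists_mem_Ioo_left_ne_zero hθ'0 hs.1 hθθ'
  obtain ⟨v, hv, hev, hgapv⟩ := hd.exists_mem_Ioo_right_ne_zero hθ'0 hs.2 hθ'γ
  have := hP
  filter_upwards [eventually_sub_le_log_measure_gt_div hX hw hwtop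
    (he u ⟨hu.1.le, hu.2.le.trans hs.2.le⟩) (he s (Ioo_subset_Icc_self hs))
    (he v ⟨hs.1.le.trans hv.1.le, hv.2.le⟩) hu.2.le hv.1.le heu hev hgapu hgapv (half_pos hε)]
    with t ht
  have hsK : |s| * (γ - θ) ≤ ε / 2 := by
    have hγθ : γ - θ ≤ ε / (2 * (K + 1)) := by linarith [min_le_right db (θ + ε / (2 * (K + 1)))]
    calc |s| * (γ - θ) ≤ (K + 1) * (ε / (2 * (K + 1))) := by
          gcongr
          · linarith
          · linarith [abs_le_max_abs_abs hs.1.le hs.2.le]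
      _ = ε / 2 := by field_simp [hK.ne']
  have hmax : max (s * θ) (s * γ) ≤ θ * s + |s| * (γ - θ) :=
    max_le (by nlinarith [abs_nonneg s]) (by nlinarith [le_abs_self s])
  linarith [le_flt hecont θ (Ioo_subset_Icc_self hs)]
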